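/- arXiv:1612.03857 — 2 statements merged into one kernel-verified Lean document; each statement's English description precedes it below -/
import Mathlib

section
/- Let H be a complex Hilbert space and let A, B, X, Y be bounded linear operators on H with A ∘ X + Y ∘ B = 0. Then there exist bounded linear operators W₁, W₂, W₃, W₄ on H with A ∘ W₂ ∘ P_{B*} + P_A ∘ W₃ ∘ B = 0 such that X = N_A ∘ W₁ + W₂ ∘ P_{B*} and Y = P_A ∘ W₃ + W₄ ∘ N_{B*}. -/
/-!
From `A X = -Y B`: the operator `A X` kills `ker B = ran(B*)ᗮ` and `(1 - P_A) Y` kills `ran B`.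
Hence `P_{A*} X (1 - P_{B*}) = 0` and `(1 - P_A) Y P_B = 0`, so `W₁ = X (1 - P_{B*})`, `W₂ = X`,
`W₃ = Y`, `W₄ = (1 - P_A) Y` work; the constraint reduces to `A X (1 - P_{B*}) = 0` via `P_A A = A`.
-/

open ContinuousLinearMap

variable {H : Type*} [NormedAddCommGroup H] [InnerProductSpace ℂ H] [CompleteSpace H]

/-- The orthogonal projection of `H` onto the closure of the range of `A`,
regarded as a bounded operator on `H`. -/
noncomputable def rangeProj (A : H →L[ℂ] H) : H →L[ℂ] H :=
  haveI : CompleteSpace (LinearMap.range (A : H →ₗ[ℂ] H)).topologicalClosure :=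
    (Submodule.isClosed_topologicalClosure _).completeSpace_coe
  (LinearMap.range (A : H →ₗ[ℂ] H)).topologicalClosure.subtypeL ∘L
    Submodule.orthogonalProjectionOnto (LinearMap.range (A : H →ₗ[ℂ] H)).topologicalClosure

lemma rangeProj_eq_starProjection (A : H →L[ℂ] H) :
    rangeProj A = (LinearMap.range (A : H →ₗ[ℂ] H)).topologicalClosure.starProjection := rfl

lemma rangeProj_comp_self (A : H →L[ℂ] H) : rangeProj A ∘L A = A := by
  ext x
  exact Submodule.starProjection_eq_self_iff.mpr
    (Submodule.le_topologicalClosure _ (LinearMap.mem_range_self _ x))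

lemma comp_rangeProj_eq_zero {A C : H →L[ℂ] H} (h : C ∘L A = 0) : C ∘L rangeProj A = 0 := by
  have hker : (LinearMap.range (A : H →ₗ[ℂ] H)).topologicalClosure ≤
      LinearMap.ker (C : H →ₗ[ℂ] H) := by
    refine Submodule.topologicalClosure_minimal _ ?_ C.isClosed_ker
    rintro _ ⟨x, rfl⟩
    exact congr($h x)
  ext x
  exact hker (Submodule.starProjection_apply_mem _ x)

lemma rangeProj_adjoint_apply_eq_zero_iff {A : H →L[ℂ] H} {x : H} :
    rangeProj (adjoint A) x = 0 ↔ A x = 0 := by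
  rw [rangeProj_eq_starProjection, Submodule.starProjection_apply_eq_zero_iff,
    Submodule.orthogonal_closure, orthogonal_range, adjoint_adjoint]
  rfl

lemma rangeProj_adjoint_comp_eq_zero_iff {A C : H →L[ℂ] H} :
    rangeProj (adjoint A) ∘L C = 0 ↔ A ∘L C = 0 := by
  simp only [ContinuousLinearMap.ext_iff, comp_apply, zero_apply,
    rangeProj_adjoint_apply_eq_zero_iff]

lemma isIdempotentElem_rangeProj (A : H →L[ℂ] H) : IsIdempotentElem (rangeProj A) :=
  Submodule.isIdempotentElem_starProjection _

lemma comp_one_sub_rangeProj_adjoint (A : H →L[ℂ] H) : A ∘L (1 - rangeProj (adjoint A)) = 0 :=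
  rangeProj_adjoint_comp_eq_zero_iff.mp (isIdempotentElem_rangeProj _).mul_one_sub_self

/-- Theorem 3.1 (second half): every solution of `A X + Y B = 0` has the form
`X = N_A W₁ + W₂ P_{B*}`, `Y = P_A W₃ + W₄ N_{B*}` with
`A W₂ P_{B*} + P_A W₃ B = 0`. -/
theorem stmt5 (A B X Y : H →L[ℂ] H) (h : A ∘L X + Y ∘L B = 0) :
    ∃ W₁ W₂ W₃ W₄ : H →L[ℂ] H,
      A ∘L W₂ ∘L rangeProj (adjoint B) + rangeProj A ∘L W₃ ∘L B = 0 ∧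
      X = (1 - rangeProj (adjoint A)) ∘L W₁ + W₂ ∘L rangeProj (adjoint B) ∧
      Y = rangeProj A ∘L W₃ + W₄ ∘L (1 - rangeProj B) := by
  have hYB : Y ∘L B = -(A ∘L X) := eq_neg_of_add_eq_zero_right h
  have hAX : A ∘L X ∘L (1 - rangeProj (adjoint B)) = 0 := by
    rw [← comp_assoc, eq_neg_of_add_eq_zero_left h, neg_comp, comp_assoc,
      comp_one_sub_rangeProj_adjoint, comp_zero, neg_zero]
  have hX : rangeProj (adjoint A) ∘L X ∘L (1 - rangeProj (adjoint B)) = 0 :=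
    rangeProj_adjoint_comp_eq_zero_iff.mpr hAX
  have hY : ((1 - rangeProj A) ∘L Y) ∘L rangeProj B = 0 := by
    refine comp_rangeProj_eq_zero ?_
    rw [comp_assoc, hYB, comp_neg, ← comp_assoc, sub_comp, rangeProj_comp_self, one_def,
      id_comp, sub_self, zero_comp, neg_zero]
  have hPA : rangeProj A ∘L A = A := rangeProj_comp_self A
  simp only [← mul_def] at *
  refine ⟨X * (1 - rangeProj (adjoint B)), X, Y, (1 - rangeProj A) * Y, ?_, ?_, ?_⟩
  · linear_combination (norm := noncomm_ring) rangeProj A * h - hPA * X - hAX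
  · linear_combination (norm := noncomm_ring) hX
  · linear_combination (norm := noncomm_ring) hY
end

section
/- Let H be a complex Hilbert space and let A, B, C be bounded linear operators on H with A* ∘ B = 0. Then the range of C is contained in (range A) + (range B) (sum of subspaces of H) if and only if there exist bounded linear operators X, Y on H with A ∘ X + B ∘ Y = C. Moreover, if these equivalent conditions hold, then there exists λ > 0 such that C ∘ C* ≤ λ • (A ∘ A* + B ∘ B*) in the Loewner order. -/
/-!
Douglas factorization: if `range C ⊆ range D` then `C = D Z` with `Z` bounded, because `D` is
injective on `(ker D)ᗮ` with the same range there, and `D⁻¹ C` has closed graph. Applied to the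
row operator `[A B] : H ⊕ H → H`, whose range is `range A + range B`, this yields `X` and `Y`.
For the Loewner bound, `(s + t)(s + t)* ≤ 2 (s s* + t t*)` and `A X X* A* ≤ ‖X‖² A A*` give
`C C* ≤ 2 r (A A* + B B*)` for any `r ≥ ‖X‖², ‖Y‖²`.
-/

namespace ContinuousLinearMap

section Banach

variable {𝕜 E F G : Type*} [NontriviallyNormedField 𝕜]
  [NormedAddCommGroup E] [NormedSpace 𝕜 E] [CompleteSpace E]
  [NormedAddCommGroup F] [NormedSpace 𝕜 F]
  [NormedAddCommGroup G] [NormedSpace 𝕜 G] [CompleteSpace G]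

theorem exists_comp_eq_of_injective_of_range_le {D : E →L[𝕜] F} (hD : Function.Injective D)
    {C : G →L[𝕜] F} (h : LinearMap.range (C : G →ₗ[𝕜] F) ≤ LinearMap.range (D : E →ₗ[𝕜] F)) :
    ∃ Z : G →L[𝕜] E, D ∘L Z = C := by
  let Z : G →ₗ[𝕜] E := (LinearEquiv.ofInjective (D : E →ₗ[𝕜] F) hD).symm.toLinearMap ∘ₗ
    (C : G →ₗ[𝕜] F).codRestrict _ fun g ↦ h ⟨g, rfl⟩
  have hDZ : ∀ g, D (Z g) = C g := fun g ↦
    LinearEquiv.ofInjective_symm_apply (h := hD) _ _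
  refine ⟨ofSeqClosedGraph (g := Z) fun u x y hu hZu ↦ hD ?_, ext hDZ⟩
  refine tendsto_nhds_unique ((D.continuous.tendsto y).comp hZu) ?_
  simpa only [Function.comp_def, hDZ] using (C.continuous.tendsto x).comp hu

end Banach

section InnerProductSpace

variable {𝕜 E E₁ E₂ F G : Type*} [RCLike 𝕜]
  [NormedAddCommGroup E] [InnerProductSpace 𝕜 E] [CompleteSpace E]
  [NormedAddCommGroup E₁] [InnerProductSpace 𝕜 E₁] [CompleteSpace E₁]
  [NormedAddCommGroup E₂] [InnerProductSpace 𝕜 E₂] [CompleteSpace E₂]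
  [NormedAddCommGroup F] [NormedSpace 𝕜 F]
  [NormedAddCommGroup G] [NormedSpace 𝕜 G] [CompleteSpace G]

theorem exists_comp_eq_of_range_le {D : E →L[𝕜] F} {C : G →L[𝕜] F}
    (h : LinearMap.range (C : G →ₗ[𝕜] F) ≤ LinearMap.range (D : E →ₗ[𝕜] F)) :
    ∃ Z : G →L[𝕜] E, D ∘L Z = C := by
  let K := (LinearMap.ker (D : E →ₗ[𝕜] F))ᗮ
  have hinj : Function.Injective (D ∘L K.subtypeL) :=
    Set.injOn_iff_injective.1 <|
      LinearMap.disjoint_ker_iff_injOn.1 (Submodule.orthogonal_disjoint _).symm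
  have hrange : LinearMap.range ((D ∘L K.subtypeL : K →L[𝕜] F) : K →ₗ[𝕜] F) =
      LinearMap.range (D : E →ₗ[𝕜] F) := by
    rw [toLinearMap_comp, LinearMap.range_comp, Submodule.toLinearMap_subtypeL,
      Submodule.range_subtype, Submodule.map_eq_range_iff, codisjoint_iff, sup_comm]
    exact Submodule.sup_orthogonal_of_hasOrthogonalProjection
  obtain ⟨Z, hZ⟩ := exists_comp_eq_of_injective_of_range_le hinj (hrange ▸ h)
  exact ⟨K.subtypeL ∘L Z, hZ⟩

theorem range_le_sup_range_iff_exists_comp_add_comp (A : E₁ →L[𝕜] F) (B : E₂ →L[𝕜] F)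
    (C : G →L[𝕜] F) :
    LinearMap.range (C : G →ₗ[𝕜] F) ≤
        LinearMap.range (A : E₁ →ₗ[𝕜] F) ⊔ LinearMap.range (B : E₂ →ₗ[𝕜] F) ↔
      ∃ X Y, A ∘L X + B ∘L Y = C := by
  refine ⟨fun h ↦ ?_, ?_⟩
  · let e := (WithLp.prodContinuousLinearEquiv 2 𝕜 E₁ E₂).toContinuousLinearMap
    have hrange : LinearMap.range (C : G →ₗ[𝕜] F) ≤
        LinearMap.range (A.coprod B ∘L e : WithLp 2 (E₁ × E₂) →ₗ[𝕜] F) := by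
      intro c hc
      obtain ⟨_, ⟨x, rfl⟩, _, ⟨y, rfl⟩, rfl⟩ := Submodule.mem_sup.1 (h hc)
      exact ⟨WithLp.toLp 2 (x, y), by simp [e]⟩
    obtain ⟨Z, rfl⟩ := exists_comp_eq_of_range_le hrange
    exact ⟨fst 𝕜 E₁ E₂ ∘L e ∘L Z, snd 𝕜 E₁ E₂ ∘L e ∘L Z, by ext; simp [e]⟩
  · rintro ⟨X, Y, rfl⟩ _ ⟨x, rfl⟩
    exact Submodule.add_mem_sup (LinearMap.mem_range_self _ _) (LinearMap.mem_range_self _ _)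

end InnerProductSpace

end ContinuousLinearMap

section StarOrderedRing

variable {R : Type*} [NonUnitalRing R] [PartialOrder R] [StarRing R] [StarOrderedRing R]

theorem add_mul_star_add_le (s t : R) :
    (s + t) * star (s + t) ≤ 2 • (s * star s + t * star t) := by
  have : 2 • (s * star s + t * star t) = (s + t) * star (s + t) + (s - t) * star (s - t) := by
    simp only [star_add, star_sub, add_mul, mul_add, sub_mul, mul_sub, two_nsmul]
    abel
  exact this ▸ le_add_of_nonneg_right (mul_star_self_nonneg _)

end StarOrderedRing

section CStarAlgebra

variable {A : Type*} [CStarAlgebra A] [PartialOrder A] [StarOrderedRing A]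

theorem CStarAlgebra.mul_mul_star_le_smul {x : A} {r : ℝ} (hr : ‖x‖ ^ 2 ≤ r) (a : A) :
    a * x * star (a * x) ≤ r • (a * star a) :=
  calc a * x * star (a * x) = a * (x * star x) * star a := by simp only [star_mul, mul_assoc]
    _ ≤ a * algebraMap ℝ A (‖x‖ ^ 2) * star a :=
      star_right_conjugate_le_conjugate CStarAlgebra.mul_star_le_algebraMap_norm_sq a
    _ = ‖x‖ ^ 2 • (a * star a) := by simp [Algebra.algebraMap_eq_smul_one]
    _ ≤ r • (a * star a) := smul_le_smul_of_nonneg_right hr (mul_star_self_nonneg a)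

theorem CStarAlgebra.add_mul_mul_star_le_smul {x y : A} {r : ℝ} (hx : ‖x‖ ^ 2 ≤ r)
    (hy : ‖y‖ ^ 2 ≤ r) (a b : A) :
    (a * x + b * y) * star (a * x + b * y) ≤ (2 * r) • (a * star a + b * star b) :=
  calc (a * x + b * y) * star (a * x + b * y)
      ≤ 2 • (a * x * star (a * x) + b * y * star (b * y)) := add_mul_star_add_le _ _
    _ ≤ 2 • (r • (a * star a) + r • (b * star b)) := by
      gcongr
      exacts [mul_mul_star_le_smul hx a, mul_mul_star_le_smul hy b]
    _ = (2 * r) • (a * star a + b * star b) := by module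

end CStarAlgebra

open ContinuousLinearMap

theorem stmt8_general {H : Type*} [NormedAddCommGroup H] [InnerProductSpace ℂ H] [CompleteSpace H]
    (A B C : H →L[ℂ] H) :
    (LinearMap.range (C : H →ₗ[ℂ] H) ≤ LinearMap.range (A : H →ₗ[ℂ] H) ⊔
      LinearMap.range (B : H →ₗ[ℂ] H) ↔
      ∃ X Y : H →L[ℂ] H, A ∘L X + B ∘L Y = C) ∧
    (LinearMap.range (C : H →ₗ[ℂ] H) ≤ LinearMap.range (A : H →ₗ[ℂ] H) ⊔
      LinearMap.range (B : H →ₗ[ℂ] H) →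
      ∃ l : ℝ, 0 < l ∧
        ((l : ℂ) • (A ∘L adjoint A + B ∘L adjoint B) - C ∘L adjoint C).IsPositive) := by
  refine ⟨range_le_sup_range_iff_exists_comp_add_comp A B C, fun h ↦ ?_⟩
  obtain ⟨X, Y, rfl⟩ := (range_le_sup_range_iff_exists_comp_add_comp A B C).1 h
  refine ⟨2 * (‖X‖ ^ 2 + ‖Y‖ ^ 2 + 1), by positivity, ?_⟩
  rw [Complex.coe_smul, ← nonneg_iff_isPositive, sub_nonneg]
  have hX : ‖X‖ ^ 2 ≤ ‖X‖ ^ 2 + ‖Y‖ ^ 2 + 1 := by linarith [sq_nonneg ‖Y‖]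
  have hY : ‖Y‖ ^ 2 ≤ ‖X‖ ^ 2 + ‖Y‖ ^ 2 + 1 := by linarith [sq_nonneg ‖X‖]
  simpa only [star_eq_adjoint, mul_def] using CStarAlgebra.add_mul_mul_star_le_smul hX hY A B

/-- Theorem 3.5: if `A* B = 0`, then `range C ⊆ range A + range B` iff
`A X + B Y = C` has a solution; in that case `C C* ≤ λ (A A* + B B*)`
for some `λ > 0` (Loewner order). -/
theorem stmt8 {H : Type*} [NormedAddCommGroup H] [InnerProductSpace ℂ H] [CompleteSpace H]
    (A B C : H →L[ℂ] H) (hAB : adjoint A ∘L B = 0) :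
    (LinearMap.range (C : H →ₗ[ℂ] H) ≤ LinearMap.range (A : H →ₗ[ℂ] H) ⊔
      LinearMap.range (B : H →ₗ[ℂ] H) ↔
      ∃ X Y : H →L[ℂ] H, A ∘L X + B ∘L Y = C) ∧
    (LinearMap.range (C : H →ₗ[ℂ] H) ≤ LinearMap.range (A : H →ₗ[ℂ] H) ⊔
      LinearMap.range (B : H →ₗ[ℂ] H) →
      ∃ l : ℝ, 0 < l ∧
        ((l : ℂ) • (A ∘L adjoint A + B ∘L adjoint B) - C ∘L adjoint C).IsPositive) :=
  stmt8_general A B C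
end
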